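/- (Serret's theorem, hard direction) If x and y are irrational and there exist a, b, c, d ∈ ℤ with ad - bc = ±1 and y = (ax + b)/(cx + d), then x ∼ y: the continued fraction expansions of x and y have a common complete quotient (equivalently, their partial quotient sequences eventually coincide up to a shift). -/

import Mathlib

/-!
Translations `x ↦ x + k`, negation and inversion each preserve the `∼`-class: a translation keeps
the fractional part, hence the first complete quotient, and for `0 < f < 1/2` one has
`cq f 2 = cq (1 - f) 3`. Since `∼` is an equivalence relation, it remains to reach
`(a x + b) / (c x + d)` from `x` by these moves, which the Euclidean algorithm does: for
`a = c q + r` with `0 ≤ r < |c|`, `(a x + b) / (c x + d) = q + ((c x + d) / (r x + s))⁻¹` where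
`s = b - q d` and `c s - d r = -(a d - b c)`. Induction on `|c|` thus ends at `c = 0`, where
`d = ±1` and the map is `x ↦ ±x + k`.
-/

noncomputable def cq (x : ℝ) : ℕ → ℝ
  | 0 => x
  | n + 1 => 1 / (cq x n - ⌊cq x n⌋)

def CFEquiv (x y : ℝ) : Prop := ∃ i j : ℕ, cq x i = cq y j

lemma cq_zero (x : ℝ) : cq x 0 = x := rfl

lemma cq_succ (x : ℝ) (n : ℕ) : cq x (n + 1) = (Int.fract (cq x n))⁻¹ := by
  rw [cq, one_div, Int.self_sub_floor]

lemma cq_add (x : ℝ) (n : ℕ) : ∀ t, cq x (n + t) = cq (cq x n) t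
  | 0 => rfl
  | t + 1 => by rw [← add_assoc, cq_succ, cq_succ, cq_add x n t]

namespace CFEquiv

lemma refl (x : ℝ) : CFEquiv x x := ⟨0, 0, rfl⟩

lemma symm {x y : ℝ} : CFEquiv x y → CFEquiv y x := fun ⟨i, j, h⟩ => ⟨j, i, h.symm⟩

lemma trans {x y z : ℝ} : CFEquiv x y → CFEquiv y z → CFEquiv x z := by
  rintro ⟨i, j, hxy⟩ ⟨k, l, hyz⟩
  rcases le_total j k with h | h
  · refine ⟨i + (k - j), l, ?_⟩
    rw [cq_add, hxy, ← cq_add, Nat.add_sub_cancel' h, hyz]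
  · refine ⟨i, l + (j - k), ?_⟩
    rw [cq_add, ← hyz, ← cq_add, Nat.add_sub_cancel' h, hxy]

end CFEquiv

lemma cfEquiv_of_fract_eq {x y : ℝ} (h : Int.fract x = Int.fract y) : CFEquiv x y :=
  ⟨1, 1, by rw [cq_succ, cq_succ, cq_zero, cq_zero, h]⟩

lemma cfEquiv_fract (x : ℝ) : CFEquiv x (Int.fract x) :=
  cfEquiv_of_fract_eq (Int.fract_fract x).symm

lemma cfEquiv_add_intCast (x : ℝ) (k : ℤ) : CFEquiv x (x + k) :=
  cfEquiv_of_fract_eq (Int.fract_add_intCast x k).symm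

lemma cfEquiv_one_sub_of_lt_half {f : ℝ} (h0 : 0 < f) (h1 : f < 1 / 2) :
    CFEquiv f (1 - f) := by
  have hf : Int.fract f = f := Int.fract_eq_self.2 ⟨h0.le, by linarith⟩
  have hg : Int.fract (1 - f) = 1 - f := Int.fract_eq_self.2 ⟨by linarith, by linarith⟩
  have hfloor : ⌊(1 - f)⁻¹⌋ = 1 := by
    rw [Int.floor_eq_iff, Int.cast_one, one_add_one_eq_two,
      one_le_inv₀ (by linarith), inv_lt_iff_one_lt_mul₀ (by linarith)]
    constructor <;> linarith
  have h2 : cq (1 - f) 2 = f⁻¹ - 1 := by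
    have hg0 : 1 - f ≠ 0 := by linarith
    have hf0 : f ≠ 0 := h0.ne'
    rw [cq_succ, cq_succ, cq_zero, hg, ← Int.self_sub_floor, hfloor, Int.cast_one,
      inv_eq_iff_eq_inv]
    field_simp
    ring
  refine ⟨2, 3, ?_⟩
  rw [cq_succ (1 - f) 2, h2, Int.fract_sub_one, cq_succ, cq_succ, cq_zero, hf]

lemma cfEquiv_one_sub {f : ℝ} (h0 : 0 < f) (h1 : f < 1) : CFEquiv f (1 - f) := by
  rcases lt_trichotomy f (1 / 2) with h | rfl | h
  · exact cfEquiv_one_sub_of_lt_half h0 h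
  · norm_num [CFEquiv.refl]
  · simpa using (cfEquiv_one_sub_of_lt_half (f := 1 - f) (by linarith) (by linarith)).symm

lemma cfEquiv_neg (x : ℝ) : CFEquiv x (-x) := by
  rcases (Int.fract_nonneg x).eq_or_lt with h | h
  · -- both first complete quotients are the junk value `0⁻¹ = 0`
    refine ⟨1, 1, ?_⟩
    rw [cq_succ, cq_succ, cq_zero, cq_zero, Int.fract_neg_eq_zero.2 h.symm, ← h]
  · refine (cfEquiv_fract x).trans ((cfEquiv_one_sub h (Int.fract_lt_one x)).trans ?_)
    rw [← Int.fract_neg h.ne']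
    exact (cfEquiv_fract _).symm

lemma cfEquiv_inv_of_pos {x : ℝ} (hx : 0 < x) : CFEquiv x x⁻¹ := by
  rcases lt_trichotomy x 1 with h | rfl | h
  · exact ⟨1, 0, by rw [cq_succ, cq_zero, cq_zero, Int.fract_eq_self.2 ⟨hx.le, h⟩]⟩
  · simpa using CFEquiv.refl 1
  · refine ⟨0, 1, ?_⟩
    rw [cq_succ, cq_zero, cq_zero,
      Int.fract_eq_self.2 ⟨(inv_pos.2 hx).le, inv_lt_one_of_one_lt₀ h⟩, inv_inv]

lemma cfEquiv_inv (x : ℝ) : CFEquiv x x⁻¹ := by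
  rcases lt_trichotomy x 0 with h | rfl | h
  · have h' := (cfEquiv_neg x).trans ((cfEquiv_inv_of_pos (neg_pos.2 h)).trans (cfEquiv_neg _))
    rwa [inv_neg, neg_neg] at h'
  · simpa using CFEquiv.refl 0
  · exact cfEquiv_inv_of_pos h

lemma cfEquiv_unit_mul_add (x : ℝ) {u : ℤ} (hu : u = 1 ∨ u = -1) (k : ℤ) :
    CFEquiv x (u * x + k) := by
  rcases hu with rfl | rfl
  · simpa using cfEquiv_add_intCast x k
  · simpa using (cfEquiv_neg x).trans (cfEquiv_add_intCast (-x) k)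

lemma cfEquiv_div_intCast (x : ℝ) (a b d : ℤ) (had : a * d = 1 ∨ a * d = -1) :
    CFEquiv x ((a * x + b) / d) := by
  have hd : (d : ℝ) * d = 1 := by
    rcases Int.isUnit_iff.mp (isUnit_of_mul_isUnit_right (Int.isUnit_iff.mpr had)) with rfl | rfl
      <;> norm_num
  have hy : (a * x + b) / d = ((a * d : ℤ) : ℝ) * x + (b * d : ℤ) := by
    rw [div_eq_iff (left_ne_zero_of_mul_eq_one hd)]
    push_cast
    linear_combination (-(a * x) - b) * hd
  rw [hy]
  exact cfEquiv_unit_mul_add x had _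

lemma moebius_sub_intCast_inv {x : ℝ} {a c d q r : ℤ} (b : ℤ) (hqr : c * q + r = a)
    (hden : (c * x + d : ℝ) ≠ 0) :
    ((a * x + b) / (c * x + d) - q)⁻¹ = (c * x + d) / (r * x + (b - q * d : ℤ)) := by
  rw [div_sub' hden, inv_div, ← hqr]
  push_cast
  ring

theorem cfEquiv_moebius {x : ℝ} (hx : Irrational x) (a b c d : ℤ)
    (hdet : a * d - b * c = 1 ∨ a * d - b * c = -1) :
    CFEquiv x ((a * x + b) / (c * x + d)) := by
  rcases eq_or_ne c 0 with rfl | hc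
  · rw [Int.cast_zero, zero_mul, zero_add]
    exact cfEquiv_div_intCast x a b d (by simpa using hdet)
  have hqr : c * (a / c) + a % c = a := Int.mul_ediv_add_emod a c
  have hr : (a % c).natAbs < c.natAbs := by
    have := Int.emod_lt_abs a hc
    rw [Int.abs_eq_natAbs] at this
    have := Int.emod_nonneg a hc
    omega
  have ih := cfEquiv_moebius hx c d (a % c) (b - a / c * d) (by
    rcases hdet with h | h
    · right; linear_combination -h - d * hqr
    · left; linear_combination -h - d * hqr)
  rw [← moebius_sub_intCast_inv b hqr ((hx.intCast_mul hc).add_intCast d).ne_zero] at ih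
  have hy := cfEquiv_add_intCast ((a * x + b) / (c * x + d) - (a / c : ℤ)) (a / c)
  rw [sub_add_cancel] at hy
  exact ih.trans ((cfEquiv_inv _).symm.trans hy)
termination_by c.natAbs

theorem serret_hard_general (x y : ℝ) (hx : Irrational x)
    (a b c d : ℤ) (hdet : a * d - b * c = 1 ∨ a * d - b * c = -1)
    (h : y = ((a : ℝ) * x + b) / ((c : ℝ) * x + d)) :
    CFEquiv x y :=
  h ▸ cfEquiv_moebius hx a b c d hdet

theorem serret_hard (x y : ℝ) (hx : Irrational x) (hy : Irrational y)
    (a b c d : ℤ) (hdet : a * d - b * c = 1 ∨ a * d - b * c = -1)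
    (h : y = ((a : ℝ) * x + b) / ((c : ℝ) * x + d)) :
    CFEquiv x y :=
  serret_hard_general x y hx a b c d hdet h
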